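/- arXiv:0807.4235 — 4 statements merged into one kernel-verified Lean document; each statement's English description precedes it below -/
import Mathlib

section
/- Let U →∂' V →∂ W be linear maps between finite-dimensional real inner product spaces with ∂ ∘ ∂' = 0. Then V decomposes as an orthogonal direct sum V = ker □ ⊕ im ∂' ⊕ im ∂*, where □ = ∂*∂ + ∂'(∂')* is the Laplacian (Hodge decomposition). -/
/-!
For `x` in the kernel of `□ = ∂*∂ + ∂'∂'*`, `⟪□x, x⟫ = ‖∂x‖² + ‖∂'*x‖²`, so harmonic vectors are
exactly those with `∂x = 0` and `∂'*x = 0`, i.e. `ker □ = (im ∂*)ᗮ ⊓ (im ∂')ᗮ`. This gives the two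
orthogonalities involving `ker □`, and `∂∂' = 0` gives `im ∂' ⊆ ker ∂ = (im ∂*)ᗮ`. The orthogonal
complement of the sum of the three pieces is then `(ker □)ᗮ ⊓ ker □ = ⊥`, so in finite dimension
they span `V`.
-/

open ContinuousLinearMap
open scoped InnerProduct

namespace ContinuousLinearMap

variable {𝕜 E F G : Type*} [RCLike 𝕜]
  [NormedAddCommGroup E] [InnerProductSpace 𝕜 E] [CompleteSpace E]
  [NormedAddCommGroup F] [InnerProductSpace 𝕜 F] [CompleteSpace F]
  [NormedAddCommGroup G] [InnerProductSpace 𝕜 G]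

theorem range_isOrtho_range_adjoint_of_comp_eq_zero {A : E →L[𝕜] F} {B : G →L[𝕜] E}
    (hAB : A ∘L B = 0) : B.range ⟂ A†.range := by
  rw [Submodule.isOrtho_iff_le, orthogonal_range, adjoint_adjoint]
  rintro _ ⟨y, rfl⟩
  exact congr($hAB y)

variable [CompleteSpace G]

/-- The Laplacian `□ = ∂*∂ + ∂'∂'*` of the complex `G →B E →A F`, with `∂ = A`, `∂' = B`. -/
noncomputable def hodgeLaplacian (A : E →L[𝕜] F) (B : G →L[𝕜] E) : E →L[𝕜] E :=
  A† ∘L A + B ∘L B†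

theorem re_inner_hodgeLaplacian_apply_self (A : E →L[𝕜] F) (B : G →L[𝕜] E) (x : E) :
    RCLike.re (inner 𝕜 (hodgeLaplacian A B x) x) = ‖A x‖ ^ 2 + ‖(B†) x‖ ^ 2 := by
  rw [hodgeLaplacian, add_apply, inner_add_left, map_add, apply_norm_sq_eq_inner_adjoint_left,
    apply_norm_sq_eq_inner_adjoint_left, adjoint_adjoint]

theorem ker_hodgeLaplacian (A : E →L[𝕜] F) (B : G →L[𝕜] E) :
    (hodgeLaplacian A B).ker = A.ker ⊓ B†.ker := by
  ext x
  simp only [Submodule.mem_inf, LinearMap.mem_ker, coe_coe]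
  constructor
  · intro hx
    have hnorm := re_inner_hodgeLaplacian_apply_self A B x
    rw [hx, inner_zero_left, map_zero, eq_comm,
      add_eq_zero_iff_of_nonneg (sq_nonneg _) (sq_nonneg _)] at hnorm
    simpa using hnorm
  · rintro ⟨hA, hB⟩
    simp [hodgeLaplacian, hA, hB]

theorem ker_hodgeLaplacian_eq_inf_orthogonal (A : E →L[𝕜] F) (B : G →L[𝕜] E) :
    (hodgeLaplacian A B).ker = (A†.range)ᗮ ⊓ B.rangeᗮ := by
  rw [ker_hodgeLaplacian, orthogonal_range, orthogonal_range, adjoint_adjoint]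

theorem ker_hodgeLaplacian_isOrtho_range_right (A : E →L[𝕜] F) (B : G →L[𝕜] E) :
    (hodgeLaplacian A B).ker ⟂ B.range :=
  Submodule.isOrtho_iff_le.mpr <| ker_hodgeLaplacian_eq_inf_orthogonal A B ▸ inf_le_right

theorem ker_hodgeLaplacian_isOrtho_range_adjoint (A : E →L[𝕜] F) (B : G →L[𝕜] E) :
    (hodgeLaplacian A B).ker ⟂ A†.range :=
  Submodule.isOrtho_iff_le.mpr <| ker_hodgeLaplacian_eq_inf_orthogonal A B ▸ inf_le_left

theorem ker_hodgeLaplacian_sup_range_sup_range_adjoint [FiniteDimensional 𝕜 E]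
    (A : E →L[𝕜] F) (B : G →L[𝕜] E) :
    (hodgeLaplacian A B).ker ⊔ B.range ⊔ A†.range = ⊤ := by
  rw [← Submodule.orthogonal_eq_bot_iff, ← Submodule.inf_orthogonal, ← Submodule.inf_orthogonal,
    inf_assoc, inf_comm B.rangeᗮ, ← ker_hodgeLaplacian_eq_inf_orthogonal]
  exact Submodule.orthogonal_disjoint _ |>.symm.eq_bot

end ContinuousLinearMap

/-- Hodge decomposition for a two-step complex:
`V = ker □ ⊕ im ∂' ⊕ im ∂*`, an orthogonal direct sum. -/
theorem stmt1 (U V W : Type)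
    [NormedAddCommGroup U] [InnerProductSpace ℝ U] [FiniteDimensional ℝ U]
    [NormedAddCommGroup V] [InnerProductSpace ℝ V] [FiniteDimensional ℝ V]
    [NormedAddCommGroup W] [InnerProductSpace ℝ W] [FiniteDimensional ℝ W]
    (d : V →L[ℝ] W) (d' : U →L[ℝ] V) (hdd : d.comp d' = 0)
    (box : V →L[ℝ] V)
    (hbox : box = (ContinuousLinearMap.adjoint d).comp d
      + d'.comp (ContinuousLinearMap.adjoint d')) :
    (LinearMap.ker (box : V →ₗ[ℝ] V) ⊔ LinearMap.range (d' : U →ₗ[ℝ] V)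
        ⊔ LinearMap.range (ContinuousLinearMap.adjoint d : W →ₗ[ℝ] V) = ⊤) ∧
    (∀ x ∈ LinearMap.ker (box : V →ₗ[ℝ] V), ∀ y ∈ LinearMap.range (d' : U →ₗ[ℝ] V), (inner ℝ x y : ℝ) = 0) ∧
    (∀ x ∈ LinearMap.ker (box : V →ₗ[ℝ] V), ∀ y ∈ LinearMap.range (ContinuousLinearMap.adjoint d : W →ₗ[ℝ] V),
      (inner ℝ x y : ℝ) = 0) ∧
    (∀ x ∈ LinearMap.range (d' : U →ₗ[ℝ] V), ∀ y ∈ LinearMap.range (ContinuousLinearMap.adjoint d : W →ₗ[ℝ] V),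
      (inner ℝ x y : ℝ) = 0) := by
  obtain rfl : box = hodgeLaplacian d d' := hbox
  simp only [← Submodule.isOrtho_iff_inner_eq]
  exact ⟨ker_hodgeLaplacian_sup_range_sup_range_adjoint d d',
    ker_hodgeLaplacian_isOrtho_range_right d d', ker_hodgeLaplacian_isOrtho_range_adjoint d d',
    range_isOrtho_range_adjoint_of_comp_eq_zero hdd⟩
end

section
/- Let i : C → D be an injective chain map between bounded chain complexes of finite-dimensional real inner product spaces inducing isomorphisms on homology. Define inductively V_top = (im i)^⊥ in the top degree and V_k = (im i ⊕ ∂V_{k+1})^⊥ in degree k. Then for every k, C_k(D) = im i ⊕ ∂V_{k+1} ⊕ V_k, with V_k orthogonal to im i ⊕ ∂V_{k+1}; in particular im i ∩ ∂V_{k+1} = 0. -/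
/-!
Since `i` is an injective quasi-isomorphism, the relative homology of `(D, im i)` vanishes:
a chain of `D` whose boundary lies in `im i` lies in `im i + ∂D`. Moreover every boundary
`∂z` lies in `im i ⊕ ∂V_{k+1}`, because `z` splits as `i c + ∂u + v` with `v ∈ V_{k+1}`, and
`∂` kills `∂u` and maps `i c` into `im i`. Hence if `∂v ∈ im i` with `v ∈ V_{k+1}`, then
`v ∈ im i ⊕ ∂V_{k+2}`, which is orthogonal to `V_{k+1}`, so `v = 0`.
-/

open LinearMap Submodule

section ChainMap

variable {R M₁ M₀ N₂ N₁ N₀ : Type*} [Ring R]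
  [AddCommGroup M₁] [Module R M₁] [AddCommGroup M₀] [Module R M₀]
  [AddCommGroup N₂] [Module R N₂] [AddCommGroup N₁] [Module R N₁]
  [AddCommGroup N₀] [Module R N₀]

theorem map_range_sup_map_sup_le {dC : M₁ →ₗ[R] M₀} {dD : N₁ →ₗ[R] N₀} {dD' : N₂ →ₗ[R] N₁}
    {i₁ : M₁ →ₗ[R] N₁} {i₀ : M₀ →ₗ[R] N₀} (hchain : dD ∘ₗ i₁ = i₀ ∘ₗ dC) (hdD : dD ∘ₗ dD' = 0)
    (W : Submodule R N₂) (U : Submodule R N₁) :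
    (range i₁ ⊔ W.map dD' ⊔ U).map dD ≤ range i₀ ⊔ U.map dD := by
  rw [Submodule.map_sup, Submodule.map_sup, ← range_comp, ← Submodule.map_comp, hchain, hdD,
    range_comp, Submodule.map_zero, sup_bot_eq]
  exact sup_le_sup_right map_le_range _

end ChainMap

section RelativeHomology

variable {R : Type*} [Ring R] {C D : ℕ → Type*}
  [∀ n, AddCommGroup (C n)] [∀ n, Module R (C n)] [∀ n, AddCommGroup (D n)] [∀ n, Module R (D n)]
  {dC : ∀ n, C (n + 1) →ₗ[R] C n} {dD : ∀ n, D (n + 1) →ₗ[R] D n} {i : ∀ n, C n →ₗ[R] D n}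

theorem exists_eq_boundary_of_map_eq_boundary
    (hdD : ∀ n, (dD n).comp (dD (n + 1)) = 0)
    (hchain : ∀ n, (dD n).comp (i (n + 1)) = (i n).comp (dC n))
    (hinj : ∀ n, Function.Injective (i n))
    (hHinj : ∀ n, ∀ y : C (n + 1), dC n y = 0 →
      (∃ z : D (n + 2), i (n + 1) y = dD (n + 1) z) → ∃ w : C (n + 2), y = dC (n + 1) w)
    (hHinj0 : ∀ y : C 0, (∃ z : D 1, i 0 y = dD 0 z) → ∃ w : C 1, y = dC 0 w) :
    ∀ k (y : C k) (v : D (k + 1)), i k y = dD k v → ∃ w, y = dC k w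
  | 0, y, v, h => hHinj0 y ⟨v, h⟩
  | n + 1, y, v, h => by
    refine hHinj n y (hinj n ?_) ⟨v, h⟩
    rw [map_zero, ← LinearMap.comp_apply, ← hchain, LinearMap.comp_apply, h,
      ← LinearMap.comp_apply, hdD, LinearMap.zero_apply]

theorem mem_range_sup_range_of_map_mem_range
    (hdD : ∀ n, (dD n).comp (dD (n + 1)) = 0)
    (hchain : ∀ n, (dD n).comp (i (n + 1)) = (i n).comp (dC n))
    (hinj : ∀ n, Function.Injective (i n))
    (hHsurj : ∀ n, ∀ x : D (n + 1), dD n x = 0 →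
      ∃ y : C (n + 1), dC n y = 0 ∧ ∃ z : D (n + 2), x = i (n + 1) y + dD (n + 1) z)
    (hHinj : ∀ n, ∀ y : C (n + 1), dC n y = 0 →
      (∃ z : D (n + 2), i (n + 1) y = dD (n + 1) z) → ∃ w : C (n + 2), y = dC (n + 1) w)
    (hHinj0 : ∀ y : C 0, (∃ z : D 1, i 0 y = dD 0 z) → ∃ w : C 1, y = dC 0 w)
    {k : ℕ} {v : D (k + 1)} (hv : dD k v ∈ range (i k)) :
    v ∈ range (i (k + 1)) ⊔ range (dD (k + 1)) := by
  obtain ⟨y, hy⟩ := hv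
  obtain ⟨w, rfl⟩ :=
    exists_eq_boundary_of_map_eq_boundary hdD hchain hinj hHinj hHinj0 k y v hy
  have hcycle : dD k (v - i (k + 1) w) = 0 := by
    rw [map_sub, ← LinearMap.comp_apply, hchain, LinearMap.comp_apply, hy, sub_self]
  obtain ⟨y', -, z, hz⟩ := hHsurj k _ hcycle
  rw [sub_eq_iff_eq_add'.mp hz, ← add_assoc, ← map_add]
  exact add_mem (mem_sup_left ⟨_, rfl⟩) (mem_sup_right ⟨z, rfl⟩)

end RelativeHomology

section Orthogonal

variable {C D : ℕ → Type*}
  [∀ n, AddCommGroup (C n)] [∀ n, Module ℝ (C n)]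
  [∀ n, NormedAddCommGroup (D n)] [∀ n, InnerProductSpace ℝ (D n)]
  [∀ n, FiniteDimensional ℝ (D n)]
  {dD : ∀ n, D (n + 1) →ₗ[ℝ] D n} {i : ∀ n, C n →ₗ[ℝ] D n} {V : ∀ n, Submodule ℝ (D n)}

theorem sup_sup_eq_top_of_eq_orthogonal
    (hV : ∀ k, V k = (range (i k) ⊔ (V (k + 1)).map (dD k))ᗮ) (k : ℕ) :
    range (i k) ⊔ (V (k + 1)).map (dD k) ⊔ V k = ⊤ := by
  rw [hV k]
  exact sup_orthogonal_of_hasOrthogonalProjection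

theorem range_le_range_sup_map_of_eq_orthogonal {dC : ∀ n, C (n + 1) →ₗ[ℝ] C n}
    (hdD : ∀ n, (dD n).comp (dD (n + 1)) = 0)
    (hchain : ∀ n, (dD n).comp (i (n + 1)) = (i n).comp (dC n))
    (hV : ∀ k, V k = (range (i k) ⊔ (V (k + 1)).map (dD k))ᗮ) (n : ℕ) :
    range (dD n) ≤ range (i n) ⊔ (V (n + 1)).map (dD n) := by
  rw [← Submodule.map_top, ← sup_sup_eq_top_of_eq_orthogonal hV (n + 1)]
  exact map_range_sup_map_sup_le (hchain n) (hdD n) _ _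

end Orthogonal

theorem stmt6_general (C D : ℕ → Type)
    [∀ n, NormedAddCommGroup (C n)] [∀ n, InnerProductSpace ℝ (C n)]
    [∀ n, NormedAddCommGroup (D n)] [∀ n, InnerProductSpace ℝ (D n)]
    [∀ n, FiniteDimensional ℝ (D n)]
    (dC : ∀ n, C (n + 1) →ₗ[ℝ] C n) (dD : ∀ n, D (n + 1) →ₗ[ℝ] D n)
    (hdD : ∀ n, (dD n).comp (dD (n + 1)) = 0)
    (i : ∀ n, C n →ₗ[ℝ] D n)
    (hchain : ∀ n, (dD n).comp (i (n + 1)) = (i n).comp (dC n))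
    (hinj : ∀ n, Function.Injective (i n))
    -- `i` induces isomorphisms on homology in all degrees
    (hHsurj : ∀ n, ∀ x : D (n + 1), dD n x = 0 →
      ∃ y : C (n + 1), dC n y = 0 ∧ ∃ z : D (n + 2), x = i (n + 1) y + dD (n + 1) z)
    (hHinj : ∀ n, ∀ y : C (n + 1), dC n y = 0 →
      (∃ z : D (n + 2), i (n + 1) y = dD (n + 1) z) → ∃ w : C (n + 2), y = dC (n + 1) w)
    (hHinj0 : ∀ y : C 0, (∃ z : D 1, i 0 y = dD 0 z) → ∃ w : C 1, y = dC 0 w)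
    -- the canonical subspaces, defined inductively from the top degree
    (V : ∀ n, Submodule ℝ (D n))
    (hV : ∀ k, V k = (LinearMap.range (i k) ⊔ (V (k + 1)).map (dD k))ᗮ) :
    ∀ k, (LinearMap.range (i k) ⊓ (V (k + 1)).map (dD k) = ⊥) ∧
      (LinearMap.range (i k) ⊔ (V (k + 1)).map (dD k) ⊔ V k = ⊤) ∧
      (∀ x ∈ LinearMap.range (i k) ⊔ (V (k + 1)).map (dD k),
        ∀ y ∈ V k, (inner ℝ x y : ℝ) = 0) := by
  intro k
  refine ⟨?_, sup_sup_eq_top_of_eq_orthogonal hV k,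
    fun x hx y hy => inner_right_of_mem_orthogonal hx (hV k ▸ hy)⟩
  rw [eq_bot_iff]
  rintro _ ⟨hxi, v, hv, rfl⟩
  have hvW : v ∈ range (i (k + 1)) ⊔ (V (k + 2)).map (dD (k + 1)) :=
    sup_le le_sup_left (range_le_range_sup_map_of_eq_orthogonal hdD hchain hV (k + 1))
      (mem_range_sup_range_of_map_mem_range hdD hchain hinj hHsurj hHinj hHinj0 hxi)
  have hv0 : v = 0 := inner_self_eq_zero.mp (inner_right_of_mem_orthogonal hvW (hV (k + 1) ▸ hv))
  rw [hv0, map_zero]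
  exact zero_mem _

/-- the canonical decomposition `C_k(D) = im i ⊕ ∂V_{k+1} ⊕ V_k`
for an injective chain map `i` between bounded chain complexes of
finite-dimensional real inner product spaces inducing isomorphisms on homology,
where `V_top = (im i)ᗮ` and `V_k = (im i ⊕ ∂V_{k+1})ᗮ`. -/
theorem stmt6 (C D : ℕ → Type)
    [∀ n, NormedAddCommGroup (C n)] [∀ n, InnerProductSpace ℝ (C n)]
    [∀ n, FiniteDimensional ℝ (C n)]
    [∀ n, NormedAddCommGroup (D n)] [∀ n, InnerProductSpace ℝ (D n)]
    [∀ n, FiniteDimensional ℝ (D n)]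
    (N : ℕ) (hbdC : ∀ n, N < n → Subsingleton (C n)) (hbdD : ∀ n, N < n → Subsingleton (D n))
    (dC : ∀ n, C (n + 1) →ₗ[ℝ] C n) (dD : ∀ n, D (n + 1) →ₗ[ℝ] D n)
    (hdC : ∀ n, (dC n).comp (dC (n + 1)) = 0)
    (hdD : ∀ n, (dD n).comp (dD (n + 1)) = 0)
    (i : ∀ n, C n →ₗ[ℝ] D n)
    (hchain : ∀ n, (dD n).comp (i (n + 1)) = (i n).comp (dC n))
    (hinj : ∀ n, Function.Injective (i n))
    -- `i` induces isomorphisms on homology in all degrees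
    (hHsurj : ∀ n, ∀ x : D (n + 1), dD n x = 0 →
      ∃ y : C (n + 1), dC n y = 0 ∧ ∃ z : D (n + 2), x = i (n + 1) y + dD (n + 1) z)
    (hHsurj0 : ∀ x : D 0, ∃ y : C 0, ∃ z : D 1, x = i 0 y + dD 0 z)
    (hHinj : ∀ n, ∀ y : C (n + 1), dC n y = 0 →
      (∃ z : D (n + 2), i (n + 1) y = dD (n + 1) z) → ∃ w : C (n + 2), y = dC (n + 1) w)
    (hHinj0 : ∀ y : C 0, (∃ z : D 1, i 0 y = dD 0 z) → ∃ w : C 1, y = dC 0 w)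
    -- the canonical subspaces, defined inductively from the top degree
    (V : ∀ n, Submodule ℝ (D n))
    (hV : ∀ k, V k = (LinearMap.range (i k) ⊔ (V (k + 1)).map (dD k))ᗮ) :
    ∀ k, (LinearMap.range (i k) ⊓ (V (k + 1)).map (dD k) = ⊥) ∧
      (LinearMap.range (i k) ⊔ (V (k + 1)).map (dD k) ⊔ V k = ⊤) ∧
      (∀ x ∈ LinearMap.range (i k) ⊔ (V (k + 1)).map (dD k),
        ∀ y ∈ V k, (inner ℝ x y : ℝ) = 0) :=
  stmt6_general C D dC dD hdD i hchain hinj hHsurj hHinj hHinj0 V hV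
end

section
/- Let i : C → D be an injective chain map between bounded chain complexes of finite-dimensional real inner product spaces inducing isomorphisms on homology, with the canonical decomposition C_k(D) = im i ⊕ ∂V_{k+1} ⊕ V_k as above. Then the boundary map of D restricted to V_k is injective for every k. -/
/-!
A cycle `x ∈ V_{k+1}` is homologous to a cycle in the image of `i`, so `x ∈ im i + ∂D_{k+2}`.
Decomposing `D_{k+2} = (im i ⊕ ∂V_{k+3}) ⊕ V_{k+2}`, the boundary sends `im i` into `im i`
(chain map) and kills `∂V_{k+3}` (`∂² = 0`), so `x ∈ im i ⊕ ∂V_{k+2} = V_{k+1}ᗮ`, whence `x = 0`.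
-/

open Submodule LinearMap

section CanonicalDecomposition

variable {C D : ℕ → Type} [∀ n, AddCommGroup (C n)] [∀ n, Module ℝ (C n)]
  [∀ n, NormedAddCommGroup (D n)] [∀ n, InnerProductSpace ℝ (D n)]
  (dC : ∀ n, C (n + 1) →ₗ[ℝ] C n) (dD : ∀ n, D (n + 1) →ₗ[ℝ] D n)
  (i : ∀ n, C n →ₗ[ℝ] D n) (V : ∀ n, Submodule ℝ (D n))

theorem range_boundary_le_range_sup_map_boundary {k : ℕ} [FiniteDimensional ℝ (D (k + 1))]
    (hchain : (dD k).comp (i (k + 1)) = (i k).comp (dC k))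
    (hdD : (dD k).comp (dD (k + 1)) = 0)
    (hV : V (k + 1) = (range (i (k + 1)) ⊔ (V (k + 2)).map (dD (k + 1)))ᗮ) :
    range (dD k) ≤ range (i k) ⊔ (V (k + 1)).map (dD k) := by
  have hdecomp : (range (i (k + 1)) ⊔ (V (k + 2)).map (dD (k + 1))) ⊔ V (k + 1) = ⊤ := by
    rw [hV]
    exact sup_orthogonal_of_hasOrthogonalProjection
  have hi : (range (i (k + 1))).map (dD k) ≤ range (i k) := by
    rw [← range_comp, hchain, range_comp]
    exact map_le_range
  have hdd : ((V (k + 2)).map (dD (k + 1))).map (dD k) = ⊥ := by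
    rw [← map_comp, hdD, Submodule.map_zero]
  rw [← Submodule.map_top, ← hdecomp, Submodule.map_sup, Submodule.map_sup, hdd, sup_bot_eq]
  exact sup_le_sup_right hi _

end CanonicalDecomposition

theorem stmt7_general (C D : ℕ → Type)
    [∀ n, NormedAddCommGroup (C n)] [∀ n, InnerProductSpace ℝ (C n)]
    [∀ n, NormedAddCommGroup (D n)] [∀ n, InnerProductSpace ℝ (D n)]
    [∀ n, FiniteDimensional ℝ (D n)]
    (dC : ∀ n, C (n + 1) →ₗ[ℝ] C n) (dD : ∀ n, D (n + 1) →ₗ[ℝ] D n)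
    (hdD : ∀ n, (dD n).comp (dD (n + 1)) = 0)
    (i : ∀ n, C n →ₗ[ℝ] D n)
    (hchain : ∀ n, (dD n).comp (i (n + 1)) = (i n).comp (dC n))
    -- `i` induces isomorphisms on homology in all degrees
    (hHsurj : ∀ n, ∀ x : D (n + 1), dD n x = 0 →
      ∃ y : C (n + 1), dC n y = 0 ∧ ∃ z : D (n + 2), x = i (n + 1) y + dD (n + 1) z)
    -- the canonical subspaces, defined inductively from the top degree
    (V : ∀ n, Submodule ℝ (D n))
    (hV : ∀ k, V k = (LinearMap.range (i k) ⊔ (V (k + 1)).map (dD k))ᗮ) :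
    ∀ k, ∀ x ∈ V (k + 1), dD k x = 0 → x = 0 := by
  intro k x hxV hx
  have hhomologous : x ∈ range (i (k + 1)) ⊔ range (dD (k + 1)) := by
    obtain ⟨y, -, z, rfl⟩ := hHsurj k x hx
    exact add_mem_sup (mem_range_self _ y) (mem_range_self _ z)
  have hbdry := range_boundary_le_range_sup_map_boundary dC dD i V (hchain (k + 1))
    (hdD (k + 1)) (hV (k + 2))
  have hxW : x ∈ range (i (k + 1)) ⊔ (V (k + 2)).map (dD (k + 1)) :=
    sup_le le_sup_left hbdry hhomologous
  rw [hV (k + 1)] at hxV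
  exact (mem_bot ℝ).mp ((orthogonal_disjoint _).le_bot ⟨hxW, hxV⟩)

/-- in the canonical decomposition, the boundary map of `D`
restricted to `V_k` is injective for every `k`. -/
theorem stmt7 (C D : ℕ → Type)
    [∀ n, NormedAddCommGroup (C n)] [∀ n, InnerProductSpace ℝ (C n)]
    [∀ n, FiniteDimensional ℝ (C n)]
    [∀ n, NormedAddCommGroup (D n)] [∀ n, InnerProductSpace ℝ (D n)]
    [∀ n, FiniteDimensional ℝ (D n)]
    (N : ℕ) (hbdC : ∀ n, N < n → Subsingleton (C n)) (hbdD : ∀ n, N < n → Subsingleton (D n))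
    (dC : ∀ n, C (n + 1) →ₗ[ℝ] C n) (dD : ∀ n, D (n + 1) →ₗ[ℝ] D n)
    (hdC : ∀ n, (dC n).comp (dC (n + 1)) = 0)
    (hdD : ∀ n, (dD n).comp (dD (n + 1)) = 0)
    (i : ∀ n, C n →ₗ[ℝ] D n)
    (hchain : ∀ n, (dD n).comp (i (n + 1)) = (i n).comp (dC n))
    (hinj : ∀ n, Function.Injective (i n))
    -- `i` induces isomorphisms on homology in all degrees
    (hHsurj : ∀ n, ∀ x : D (n + 1), dD n x = 0 →
      ∃ y : C (n + 1), dC n y = 0 ∧ ∃ z : D (n + 2), x = i (n + 1) y + dD (n + 1) z)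
    (hHsurj0 : ∀ x : D 0, ∃ y : C 0, ∃ z : D 1, x = i 0 y + dD 0 z)
    (hHinj : ∀ n, ∀ y : C (n + 1), dC n y = 0 →
      (∃ z : D (n + 2), i (n + 1) y = dD (n + 1) z) → ∃ w : C (n + 2), y = dC (n + 1) w)
    (hHinj0 : ∀ y : C 0, (∃ z : D 1, i 0 y = dD 0 z) → ∃ w : C 1, y = dC 0 w)
    -- the canonical subspaces, defined inductively from the top degree
    (V : ∀ n, Submodule ℝ (D n))
    (hV : ∀ k, V k = (LinearMap.range (i k) ⊔ (V (k + 1)).map (dD k))ᗮ) :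
    ∀ k, ∀ x ∈ V (k + 1), dD k x = 0 → x = 0 :=
  stmt7_general C D dC dD hdD i hchain hHsurj V hV
end

section
/- Let i : C → D be an injective chain map between bounded chain complexes of finite-dimensional real inner product spaces inducing isomorphisms on homology, with the canonical decomposition C_k(D) = im i ⊕ ∂V_{k+1} ⊕ V_k. Writing s_k(C) = dim C_k and s_k(D) = dim D_k, one has dim V_0 = 0 and, for k ≥ 1, dim V_k = (−1)^k ( Σ_{j=0}^{k−1} (−1)^j s_j(C) − Σ_{j=0}^{k−1} (−1)^j s_j(D) ). In particular dim V_1 = s_0(D) − s_0(C). -/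
/-!
If `v ∈ V_{k+1}` has `∂v ∈ im i`, then `∂v = i(∂w)` because `i` is injective on homology, so
`i w - v` is a cycle, hence lies in `im i ⊕ ∂D_{k+2} ⊆ im i ⊕ ∂V_{k+2} = V_{k+1}^⊥`; thus `v = 0`.
Consequently `∂` is injective on `V_{k+1}` and `∂V_{k+1} ∩ im i = 0`, so the canonical decomposition
of `D_k` gives `s_k(D) = s_k(C) + dim V_{k+1} + dim V_k`. Surjectivity on `H_0` gives `V_0 = 0`, and
the recursion unrolls to the alternating sums.
-/

open Module LinearMap Submodule

theorem eq_alternating_sum_of_add_succ (v a b : ℕ → ℤ) (h0 : v 0 = 0)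
    (h : ∀ n, b n = a n + v (n + 1) + v n) (k : ℕ) :
    v k = (-1) ^ k * (∑ j ∈ Finset.range k, (-1) ^ j * a j
      - ∑ j ∈ Finset.range k, (-1) ^ j * b j) := by
  induction k with
  | zero => simp [h0]
  | succ n ih =>
    have hsq : (-1 : ℤ) ^ n * (-1) ^ n = 1 := by rw [← pow_add, Even.neg_one_pow ⟨n, rfl⟩]
    rw [Finset.sum_range_succ, Finset.sum_range_succ, pow_succ]
    linear_combination -h n - ih + (a n - b n) * hsq

theorem finrank_eq_add_finrank_orthogonal_range_sup_map {𝕜 M F E : Type*} [RCLike 𝕜]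
    [AddCommGroup M] [Module 𝕜 M] [AddCommGroup F] [Module 𝕜 F]
    [NormedAddCommGroup E] [InnerProductSpace 𝕜 E] [FiniteDimensional 𝕜 E]
    {f : M →ₗ[𝕜] E} {g : F →ₗ[𝕜] E} {W : Submodule 𝕜 F} (hf : Function.Injective f)
    (hW : ∀ w ∈ W, g w ∈ range f → w = 0) :
    finrank 𝕜 E = finrank 𝕜 M + finrank 𝕜 W + finrank 𝕜 (range f ⊔ W.map g)ᗮ := by
  have hdisj : range f ⊓ W.map g = ⊥ := by
    refine eq_bot_iff.mpr ?_
    rintro _ ⟨hx, w, hw, rfl⟩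
    rw [hW w hw hx, map_zero]
    exact zero_mem _
  have hgW : Function.Injective (g ∘ₗ W.subtype) := by
    refine (injective_iff_map_eq_zero _).mpr fun w hw => Subtype.ext ?_
    exact hW w w.2 (by rw [show g w = 0 from hw]; exact zero_mem _)
  have hmap : W.map g = range (g ∘ₗ W.subtype) := by rw [range_comp, range_subtype]
  have hsup := finrank_sup_add_finrank_inf_eq (range f) (W.map g)
  rw [hdisj, finrank_bot, add_zero, finrank_range_of_inj hf, hmap,
    finrank_range_of_inj hgW, ← hmap] at hsup
  rw [← finrank_add_finrank_orthogonal (range f ⊔ W.map g), hsup]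

section Homology

variable {R : Type*} [Ring R] {C D : ℕ → Type*}
  [∀ n, AddCommGroup (C n)] [∀ n, Module R (C n)] [∀ n, AddCommGroup (D n)] [∀ n, Module R (D n)]
  {dC : ∀ n, C (n + 1) →ₗ[R] C n} {dD : ∀ n, D (n + 1) →ₗ[R] D n} {i : ∀ n, C n →ₗ[R] D n}

theorem exists_eq_dC_of_i_eq_dD
    (hdD : ∀ n, (dD n).comp (dD (n + 1)) = 0)
    (hchain : ∀ n, (dD n).comp (i (n + 1)) = (i n).comp (dC n))
    (hinj : ∀ n, Function.Injective (i n))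
    (hHinj : ∀ n, ∀ y : C (n + 1), dC n y = 0 →
      (∃ z : D (n + 2), i (n + 1) y = dD (n + 1) z) → ∃ w : C (n + 2), y = dC (n + 1) w)
    (hHinj0 : ∀ y : C 0, (∃ z : D 1, i 0 y = dD 0 z) → ∃ w : C 1, y = dC 0 w)
    {k : ℕ} {y : C k} {z : D (k + 1)} (hz : i k y = dD k z) : ∃ w, y = dC k w := by
  cases k with
  | zero => exact hHinj0 y ⟨z, hz⟩
  | succ n =>
    have hcycle : dC n y = 0 := hinj n <| by
      rw [map_zero, ← LinearMap.comp_apply, ← hchain, LinearMap.comp_apply, hz,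
        ← LinearMap.comp_apply, hdD, LinearMap.zero_apply]
    exact hHinj n y hcycle ⟨z, hz⟩

end Homology

section CanonicalDecomposition

variable {C D : ℕ → Type*}
  [∀ n, AddCommGroup (C n)] [∀ n, Module ℝ (C n)]
  [∀ n, NormedAddCommGroup (D n)] [∀ n, InnerProductSpace ℝ (D n)]
  [∀ n, FiniteDimensional ℝ (D n)]
  {dC : ∀ n, C (n + 1) →ₗ[ℝ] C n} {dD : ∀ n, D (n + 1) →ₗ[ℝ] D n} {i : ∀ n, C n →ₗ[ℝ] D n}
  {V : ∀ n, Submodule ℝ (D n)}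

theorem range_dD_le_range_sup_map
    (hdD : ∀ n, (dD n).comp (dD (n + 1)) = 0)
    (hchain : ∀ n, (dD n).comp (i (n + 1)) = (i n).comp (dC n))
    (hV : ∀ k, V k = (range (i k) ⊔ (V (k + 1)).map (dD k))ᗮ) (k : ℕ) :
    range (dD k) ≤ range (i k) ⊔ (V (k + 1)).map (dD k) := by
  rintro _ ⟨z, rfl⟩
  have hz : z ∈ (range (i (k + 1)) ⊔ (V (k + 2)).map (dD (k + 1))) ⊔ V (k + 1) := by
    rw [hV (k + 1), sup_orthogonal_of_hasOrthogonalProjection]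
    trivial
  obtain ⟨_, hw, u, hu, rfl⟩ := mem_sup.mp hz
  obtain ⟨_, ⟨a, rfl⟩, _, ⟨q, -, rfl⟩, rfl⟩ := mem_sup.mp hw
  have hia : dD k (i (k + 1) a) = i k (dC k a) := LinearMap.congr_fun (hchain k) a
  have hdq : dD k (dD (k + 1) q) = 0 := LinearMap.congr_fun (hdD k) q
  rw [map_add, map_add, hia, hdq, add_zero]
  exact add_mem (mem_sup_left ⟨_, rfl⟩) (mem_sup_right (mem_map_of_mem hu))

theorem eq_zero_of_mem_of_dD_mem_range
    (hdD : ∀ n, (dD n).comp (dD (n + 1)) = 0)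
    (hchain : ∀ n, (dD n).comp (i (n + 1)) = (i n).comp (dC n))
    (hinj : ∀ n, Function.Injective (i n))
    (hHsurj : ∀ n, ∀ x : D (n + 1), dD n x = 0 →
      ∃ y : C (n + 1), dC n y = 0 ∧ ∃ z : D (n + 2), x = i (n + 1) y + dD (n + 1) z)
    (hHinj : ∀ n, ∀ y : C (n + 1), dC n y = 0 →
      (∃ z : D (n + 2), i (n + 1) y = dD (n + 1) z) → ∃ w : C (n + 2), y = dC (n + 1) w)
    (hHinj0 : ∀ y : C 0, (∃ z : D 1, i 0 y = dD 0 z) → ∃ w : C 1, y = dC 0 w)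
    (hV : ∀ k, V k = (range (i k) ⊔ (V (k + 1)).map (dD k))ᗮ)
    {k : ℕ} {v : D (k + 1)} (hv : v ∈ V (k + 1)) (hdv : dD k v ∈ range (i k)) : v = 0 := by
  obtain ⟨y, hy⟩ := hdv
  obtain ⟨w, rfl⟩ := exists_eq_dC_of_i_eq_dD hdD hchain hinj hHinj hHinj0 hy
  have hcycle : dD k (i (k + 1) w - v) = 0 := by
    rw [map_sub, ← LinearMap.comp_apply, hchain, LinearMap.comp_apply, hy, sub_self]
  obtain ⟨y', -, z, hz⟩ := hHsurj k _ hcycle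
  have hperp : v ∈ range (i (k + 1)) ⊔ (V (k + 2)).map (dD (k + 1)) := by
    rw [show v = i (k + 1) w - i (k + 1) y' - dD (k + 1) z by rw [sub_sub, ← hz]; abel]
    exact sub_mem (sub_mem (mem_sup_left ⟨w, rfl⟩) (mem_sup_left ⟨y', rfl⟩))
      (range_dD_le_range_sup_map hdD hchain hV (k + 1) ⟨z, rfl⟩)
  rw [hV (k + 1)] at hv
  exact disjoint_def.mp (orthogonal_disjoint _) v hperp hv

theorem V_zero_eq_bot
    (hdD : ∀ n, (dD n).comp (dD (n + 1)) = 0)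
    (hchain : ∀ n, (dD n).comp (i (n + 1)) = (i n).comp (dC n))
    (hHsurj0 : ∀ x : D 0, ∃ y : C 0, ∃ z : D 1, x = i 0 y + dD 0 z)
    (hV : ∀ k, V k = (range (i k) ⊔ (V (k + 1)).map (dD k))ᗮ) : V 0 = ⊥ := by
  rw [hV 0, orthogonal_eq_bot_iff, eq_top_iff]
  rintro x -
  obtain ⟨y, z, rfl⟩ := hHsurj0 x
  exact add_mem (mem_sup_left ⟨y, rfl⟩) (range_dD_le_range_sup_map hdD hchain hV 0 ⟨z, rfl⟩)

end CanonicalDecomposition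

theorem stmt8_general (C D : ℕ → Type)
    [∀ n, NormedAddCommGroup (C n)] [∀ n, InnerProductSpace ℝ (C n)]
    [∀ n, NormedAddCommGroup (D n)] [∀ n, InnerProductSpace ℝ (D n)]
    [∀ n, FiniteDimensional ℝ (D n)]
    (dC : ∀ n, C (n + 1) →ₗ[ℝ] C n) (dD : ∀ n, D (n + 1) →ₗ[ℝ] D n)
    (hdD : ∀ n, (dD n).comp (dD (n + 1)) = 0)
    (i : ∀ n, C n →ₗ[ℝ] D n)
    (hchain : ∀ n, (dD n).comp (i (n + 1)) = (i n).comp (dC n))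
    (hinj : ∀ n, Function.Injective (i n))
    -- `i` induces isomorphisms on homology in all degrees
    (hHsurj : ∀ n, ∀ x : D (n + 1), dD n x = 0 →
      ∃ y : C (n + 1), dC n y = 0 ∧ ∃ z : D (n + 2), x = i (n + 1) y + dD (n + 1) z)
    (hHsurj0 : ∀ x : D 0, ∃ y : C 0, ∃ z : D 1, x = i 0 y + dD 0 z)
    (hHinj : ∀ n, ∀ y : C (n + 1), dC n y = 0 →
      (∃ z : D (n + 2), i (n + 1) y = dD (n + 1) z) → ∃ w : C (n + 2), y = dC (n + 1) w)
    (hHinj0 : ∀ y : C 0, (∃ z : D 1, i 0 y = dD 0 z) → ∃ w : C 1, y = dC 0 w)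
    -- the canonical subspaces, defined inductively from the top degree
    (V : ∀ n, Submodule ℝ (D n))
    (hV : ∀ k, V k = (LinearMap.range (i k) ⊔ (V (k + 1)).map (dD k))ᗮ) :
    Module.finrank ℝ (V 0) = 0 ∧
      (∀ k, 1 ≤ k → (Module.finrank ℝ (V k) : ℤ) =
        (-1) ^ k * ((∑ j ∈ Finset.range k, (-1) ^ j * (Module.finrank ℝ (C j) : ℤ))
          - ∑ j ∈ Finset.range k, (-1) ^ j * (Module.finrank ℝ (D j) : ℤ))) ∧
      (Module.finrank ℝ (V 1) : ℤ)
        = (Module.finrank ℝ (D 0) : ℤ) - (Module.finrank ℝ (C 0) : ℤ) := by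
  have hV0 : V 0 = ⊥ := V_zero_eq_bot hdD hchain hHsurj0 hV
  have hrec (k : ℕ) :
      finrank ℝ (D k) = finrank ℝ (C k) + finrank ℝ (V (k + 1)) + finrank ℝ (V k) := by
    rw [hV k]
    exact finrank_eq_add_finrank_orthogonal_range_sup_map (hinj k) fun _ hv hdv =>
      eq_zero_of_mem_of_dD_mem_range hdD hchain hinj hHsurj hHinj hHinj0 hV hv hdv
  have hformula := eq_alternating_sum_of_add_succ (fun k => (finrank ℝ (V k) : ℤ))
    (fun k => finrank ℝ (C k)) (fun k => finrank ℝ (D k)) (by simp [hV0])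
    (fun n => by exact_mod_cast hrec n)
  exact ⟨by rw [hV0, finrank_bot], fun k _ => hformula k, by simpa using hformula 1⟩

/-- dimension formula for the canonical subspaces `V_k`:
`dim V_0 = 0` and, for `k ≥ 1`,
`dim V_k = (−1)^k (Σ_{j<k} (−1)^j dim C_j − Σ_{j<k} (−1)^j dim D_j)`;
in particular `dim V_1 = dim D_0 − dim C_0`. -/
theorem stmt8 (C D : ℕ → Type)
    [∀ n, NormedAddCommGroup (C n)] [∀ n, InnerProductSpace ℝ (C n)]
    [∀ n, FiniteDimensional ℝ (C n)]
    [∀ n, NormedAddCommGroup (D n)] [∀ n, InnerProductSpace ℝ (D n)]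
    [∀ n, FiniteDimensional ℝ (D n)]
    (N : ℕ) (hbdC : ∀ n, N < n → Subsingleton (C n)) (hbdD : ∀ n, N < n → Subsingleton (D n))
    (dC : ∀ n, C (n + 1) →ₗ[ℝ] C n) (dD : ∀ n, D (n + 1) →ₗ[ℝ] D n)
    (hdC : ∀ n, (dC n).comp (dC (n + 1)) = 0)
    (hdD : ∀ n, (dD n).comp (dD (n + 1)) = 0)
    (i : ∀ n, C n →ₗ[ℝ] D n)
    (hchain : ∀ n, (dD n).comp (i (n + 1)) = (i n).comp (dC n))
    (hinj : ∀ n, Function.Injective (i n))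
    -- `i` induces isomorphisms on homology in all degrees
    (hHsurj : ∀ n, ∀ x : D (n + 1), dD n x = 0 →
      ∃ y : C (n + 1), dC n y = 0 ∧ ∃ z : D (n + 2), x = i (n + 1) y + dD (n + 1) z)
    (hHsurj0 : ∀ x : D 0, ∃ y : C 0, ∃ z : D 1, x = i 0 y + dD 0 z)
    (hHinj : ∀ n, ∀ y : C (n + 1), dC n y = 0 →
      (∃ z : D (n + 2), i (n + 1) y = dD (n + 1) z) → ∃ w : C (n + 2), y = dC (n + 1) w)
    (hHinj0 : ∀ y : C 0, (∃ z : D 1, i 0 y = dD 0 z) → ∃ w : C 1, y = dC 0 w)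
    -- the canonical subspaces, defined inductively from the top degree
    (V : ∀ n, Submodule ℝ (D n))
    (hV : ∀ k, V k = (LinearMap.range (i k) ⊔ (V (k + 1)).map (dD k))ᗮ) :
    Module.finrank ℝ (V 0) = 0 ∧
      (∀ k, 1 ≤ k → (Module.finrank ℝ (V k) : ℤ) =
        (-1) ^ k * ((∑ j ∈ Finset.range k, (-1) ^ j * (Module.finrank ℝ (C j) : ℤ))
          - ∑ j ∈ Finset.range k, (-1) ^ j * (Module.finrank ℝ (D j) : ℤ))) ∧
      (Module.finrank ℝ (V 1) : ℤ)
        = (Module.finrank ℝ (D 0) : ℤ) - (Module.finrank ℝ (C 0) : ℤ) :=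
  stmt8_general C D dC dD hdD i hchain hinj hHsurj hHsurj0 hHinj hHinj0 V hV
end
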